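/- Let ε ∈ {0,1}, ν > 0, ζ with 1+ζν² ≠ 0, m = ν²U_XX − εU, and suppose U solves m_T = −m_X U − 2mU_X + (2/3)(1−ν^{5/2})U_XXX. Let γ and δ satisfy γ_X = −(3/(4(1+ζν²)))γ² + m + (ε/3)(ζ+√ν), γ_T = [(2/3)(ζν²+1)U_X − (2/3)(ζ+√ν)γ − γU]_X, δ_X = γ, δ_T = (2/3)(ζν²+1)U_X − (2/3)(ζ+√ν)γ − Uγ. Then G = γ·exp((3/2)δ/(1+ζν²)) satisfies the linearization of the equation for U: writing the equation as εU_T − ν²U_XXT = F(U, U_X, U_XX, U_XXX), the function G satisfies εG_T − ν²G_XXT = F_*(G), where F_* is the Fréchet derivative (formal linearization) of F and derivatives of G are computed using the extended total derivatives incorporating the γ, δ equations. -/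

import Mathlib

noncomputable section

/-- Partial derivative in the first variable. -/
def pdx (f : ℝ → ℝ → ℝ) (x t : ℝ) : ℝ := deriv (fun x' => f x' t) x

/-- Partial derivative in the second variable. -/
def pdt (f : ℝ → ℝ → ℝ) (x t : ℝ) : ℝ := deriv (fun t' => f x t') t

/-- Smoothness of a function of two real variables. -/
def Smooth2 (f : ℝ → ℝ → ℝ) : Prop := ContDiff ℝ (⊤ : ℕ∞) (fun p : ℝ × ℝ => f p.1 p.2)

/-- m = ν² U_XX - ε U -/
def mgen (U : ℝ → ℝ → ℝ) (ε ν : ℝ) : ℝ → ℝ → ℝ := fun a b =>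
  ν ^ 2 * pdx (fun c d => pdx U c d) a b - ε * U a b





lemma Smooth2.hasDerivX {f : ℝ → ℝ → ℝ} (hf : Smooth2 f) (x t : ℝ) :
    HasDerivAt (fun x' => f x' t) (pdx f x t) x := by
  have h : Differentiable ℝ (fun x' => f x' t) :=
    (hf.comp (contDiff_id.prodMk contDiff_const)).differentiable (by simp)
  exact (h x).hasDerivAt

lemma Smooth2.hasDerivT {f : ℝ → ℝ → ℝ} (hf : Smooth2 f) (x t : ℝ) :
    HasDerivAt (fun t' => f x t') (pdt f x t) t := by
  have h : Differentiable ℝ (fun t' => f x t') :=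
    (hf.comp (contDiff_const.prodMk contDiff_id)).differentiable (by simp)
  exact (h t).hasDerivAt

lemma pdx_eq {f : ℝ → ℝ → ℝ} {x t v : ℝ} (h : HasDerivAt (fun x' => f x' t) v x) :
    pdx f x t = v := h.deriv

lemma pdt_eq {f : ℝ → ℝ → ℝ} {x t v : ℝ} (h : HasDerivAt (fun t' => f x t') v t) :
    pdt f x t = v := h.deriv

lemma pdx_congr {f g : ℝ → ℝ → ℝ} {x t : ℝ} (h : ∀ a b, f a b = g a b) :
    pdx f x t = pdx g x t := by
  show deriv _ x = deriv _ x
  rw [show (fun x' => f x' t) = (fun x' => g x' t) from funext fun a => h a t]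

lemma pdt_congr {f g : ℝ → ℝ → ℝ} {x t : ℝ} (h : ∀ a b, f a b = g a b) :
    pdt f x t = pdt g x t := by
  show deriv _ t = deriv _ t
  rw [show (fun t' => f x t') = (fun t' => g x t') from funext fun b => h x b]

lemma smooth2_pdx {f : ℝ → ℝ → ℝ} (hf : Smooth2 f) : Smooth2 (pdx f) := by
  have hF : ContDiff ℝ (⊤ : ℕ∞) (fderiv ℝ (fun p : ℝ × ℝ => f p.1 p.2)) :=
    hf.fderiv_right (by simp)
  have h2 : ContDiff ℝ (⊤ : ℕ∞) (fun p : ℝ × ℝ => fderiv ℝ (fun p : ℝ × ℝ => f p.1 p.2) p (1, 0)) :=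
    hF.clm_apply contDiff_const
  have he : ∀ a b : ℝ, pdx f a b = fderiv ℝ (fun p : ℝ × ℝ => f p.1 p.2) (a, b) (1, 0) := by
    intro a b
    have hd : HasFDerivAt (fun p : ℝ × ℝ => f p.1 p.2)
        (fderiv ℝ (fun p : ℝ × ℝ => f p.1 p.2) (a, b)) (a, b) :=
      (hf.differentiable (by simp) (a, b)).hasFDerivAt
    have : HasDerivAt (fun x' => f x' b)
        (fderiv ℝ (fun p : ℝ × ℝ => f p.1 p.2) (a, b) (1, 0)) a :=
      by have := hd.comp_hasDerivAt a ((hasDerivAt_id a).prodMk (hasDerivAt_const a b)); exact this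
    exact this.deriv
  show ContDiff ℝ (⊤ : ℕ∞) (fun p : ℝ × ℝ => pdx f p.1 p.2)
  have : (fun p : ℝ × ℝ => pdx f p.1 p.2)
      = fun p : ℝ × ℝ => fderiv ℝ (fun p : ℝ × ℝ => f p.1 p.2) p (1, 0) := by
    funext p; exact he p.1 p.2
  rw [this]; exact h2

lemma pdt_fderiv {f : ℝ → ℝ → ℝ} (hf : Smooth2 f) (a b : ℝ) :
    pdt f a b = fderiv ℝ (fun p : ℝ × ℝ => f p.1 p.2) (a, b) (0, 1) := by
  have hd : HasFDerivAt (fun p : ℝ × ℝ => f p.1 p.2)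
      (fderiv ℝ (fun p : ℝ × ℝ => f p.1 p.2) (a, b)) (a, b) :=
    (hf.differentiable (by simp) (a, b)).hasFDerivAt
  exact (hd.comp_hasDerivAt b ((hasDerivAt_const b a).prodMk (hasDerivAt_id b))).deriv

lemma pdx_fderiv {f : ℝ → ℝ → ℝ} (hf : Smooth2 f) (a b : ℝ) :
    pdx f a b = fderiv ℝ (fun p : ℝ × ℝ => f p.1 p.2) (a, b) (1, 0) := by
  have hd : HasFDerivAt (fun p : ℝ × ℝ => f p.1 p.2)
      (fderiv ℝ (fun p : ℝ × ℝ => f p.1 p.2) (a, b)) (a, b) :=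
    (hf.differentiable (by simp) (a, b)).hasFDerivAt
  exact (hd.comp_hasDerivAt a ((hasDerivAt_id a).prodMk (hasDerivAt_const a b))).deriv

lemma smooth2_pdt {f : ℝ → ℝ → ℝ} (hf : Smooth2 f) : Smooth2 (pdt f) := by
  have hF : ContDiff ℝ (⊤ : ℕ∞) (fderiv ℝ (fun p : ℝ × ℝ => f p.1 p.2)) :=
    hf.fderiv_right (by simp)
  have h2 : ContDiff ℝ (⊤ : ℕ∞) (fun p : ℝ × ℝ => fderiv ℝ (fun p : ℝ × ℝ => f p.1 p.2) p (0, 1)) :=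
    hF.clm_apply contDiff_const
  show ContDiff ℝ (⊤ : ℕ∞) (fun p : ℝ × ℝ => pdt f p.1 p.2)
  have : (fun p : ℝ × ℝ => pdt f p.1 p.2)
      = fun p : ℝ × ℝ => fderiv ℝ (fun p : ℝ × ℝ => f p.1 p.2) p (0, 1) := by
    funext p; exact pdt_fderiv hf p.1 p.2
  rw [this]; exact h2

/-- Clairaut/Schwarz for smooth functions of two real variables. -/
lemma clairaut {f : ℝ → ℝ → ℝ} (hf : Smooth2 f) (x t : ℝ) :
    pdt (pdx f) x t = pdx (pdt f) x t := by
  set F := fun p : ℝ × ℝ => f p.1 p.2 with hFdef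
  have hF' : ContDiff ℝ (⊤ : ℕ∞) (fderiv ℝ F) := hf.fderiv_right (by simp)
  have hdiff : ∀ y, HasFDerivAt F (fderiv ℝ F y) y := fun y =>
    (hf.differentiable (by simp) y).hasFDerivAt
  have hsnd : HasFDerivAt (fderiv ℝ F) (fderiv ℝ (fderiv ℝ F) (x, t)) (x, t) :=
    (hF'.differentiable (by simp) (x, t)).hasFDerivAt
  have hsymm := second_derivative_symmetric hdiff hsnd
  -- pdt of pdx
  have h1 : pdt (pdx f) x t
      = fderiv ℝ (fderiv ℝ F) (x, t) (0, 1) (1, 0) := by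
    have hfun : (fun t' => pdx f x t') = fun t' => fderiv ℝ F (x, t') (1, 0) := by
      funext t'; exact pdx_fderiv hf x t'
    have hc : HasDerivAt (fun t' => fderiv ℝ F (x, t'))
        (fderiv ℝ (fderiv ℝ F) (x, t) (0, 1)) t :=
      hsnd.comp_hasDerivAt t ((hasDerivAt_const t x).prodMk (hasDerivAt_id t))
    have := hc.clm_apply (hasDerivAt_const t ((1 : ℝ), (0 : ℝ)))
    simp only [map_zero, add_zero] at this
    show deriv (fun t' => pdx f x t') t = _
    rw [hfun]
    exact this.deriv
  have h2 : pdx (pdt f) x t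
      = fderiv ℝ (fderiv ℝ F) (x, t) (1, 0) (0, 1) := by
    have hfun : (fun x' => pdt f x' t) = fun x' => fderiv ℝ F (x', t) (0, 1) := by
      funext x'; exact pdt_fderiv hf x' t
    have hc : HasDerivAt (fun x' => fderiv ℝ F (x', t))
        (fderiv ℝ (fderiv ℝ F) (x, t) (1, 0)) x :=
      hsnd.comp_hasDerivAt x ((hasDerivAt_id x).prodMk (hasDerivAt_const x t))
    have := hc.clm_apply (hasDerivAt_const x ((0 : ℝ), (1 : ℝ)))
    simp only [map_zero, add_zero] at this
    show deriv (fun x' => pdt f x' t) x = _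
    rw [hfun]
    exact this.deriv
  rw [h1, h2, hsymm]



set_option maxHeartbeats 3200000 in
/-- G = γ·exp((3/2)δ/(1+ζν²)) is a shadow of a nonlocal symmetry:
it satisfies the formal linearization ε G_T - ν² G_XXT = F_*(G) of the equation
ε U_T - ν² U_XXT = F(U, U_X, U_XX, U_XXX). -/
theorem gen_nonlocal_shadow (U γ δ G : ℝ → ℝ → ℝ)
    (hU : Smooth2 U) (hγ : Smooth2 γ) (hδ : Smooth2 δ)
    (ε ν ζ : ℝ) (hε : ε = 0 ∨ ε = 1) (hν : 0 < ν) (hζ : 1 + ζ * ν ^ 2 ≠ 0)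
    (hUeq : ∀ x t, pdt (mgen U ε ν) x t
      = - pdx (mgen U ε ν) x t * U x t - 2 * mgen U ε ν x t * pdx U x t
        + 2 / 3 * (1 - ν ^ 2 * Real.sqrt ν)
          * pdx (fun a b => pdx (fun c d => pdx U c d) a b) x t)
    (hγX : ∀ x t, pdx γ x t
      = -(3 / (4 * (1 + ζ * ν ^ 2))) * (γ x t) ^ 2 + mgen U ε ν x t
        + ε / 3 * (ζ + Real.sqrt ν))
    (hγT : ∀ x t, pdt γ x t
      = pdx (fun a b => 2 / 3 * (ζ * ν ^ 2 + 1) * pdx U a b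
          - 2 / 3 * (ζ + Real.sqrt ν) * γ a b - γ a b * U a b) x t)
    (hδX : ∀ x t, pdx δ x t = γ x t)
    (hδT : ∀ x t, pdt δ x t
      = 2 / 3 * (ζ * ν ^ 2 + 1) * pdx U x t
        - 2 / 3 * (ζ + Real.sqrt ν) * γ x t - U x t * γ x t)
    (hG : ∀ x t, G x t
      = γ x t * Real.exp (3 / 2 * δ x t / (1 + ζ * ν ^ 2))) :
    ∀ x t : ℝ,
      ε * pdt G x t
          - ν ^ 2 * pdt (fun a b => pdx (fun c d => pdx G c d) a b) x t
        = (-3 * ε * pdx U x t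
              + ν ^ 2 * pdx (fun a b => pdx (fun c d => pdx U c d) a b) x t) * G x t
          + (2 * ν ^ 2 * pdx (fun c d => pdx U c d) x t - 3 * ε * U x t) * pdx G x t
          + 2 * ν ^ 2 * pdx U x t * pdx (fun c d => pdx G c d) x t
          + (ν ^ 2 * U x t - 2 / 3 * (1 - ν ^ 2 * Real.sqrt ν))
              * pdx (fun a b => pdx (fun c d => pdx G c d) a b) x t := by
  have hUx : Smooth2 (pdx U) := smooth2_pdx hU
  have hUxx : Smooth2 (pdx (pdx U)) := smooth2_pdx hUx
  have hUxxx : Smooth2 (pdx (pdx (pdx U))) := smooth2_pdx hUxx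
  have hm : Smooth2 (mgen U ε ν) := by
    unfold Smooth2 mgen
    exact (contDiff_const.mul hUxx).sub (contDiff_const.mul hU)
  have hmx : Smooth2 (pdx (mgen U ε ν)) := smooth2_pdx hm
  have hEx : ∀ a b : ℝ, HasDerivAt (fun x' => Real.exp (3 / 2 * δ x' b / (1 + ζ * ν ^ 2)))
      (Real.exp (3 / 2 * δ a b / (1 + ζ * ν ^ 2)) * (3 / 2 * γ a b / (1 + ζ * ν ^ 2))) a := by
    intro a b
    have h := (((hδ.hasDerivX a b).const_mul (3 / 2 : ℝ)).div_const (1 + ζ * ν ^ 2)).exp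
    rw [hδX a b] at h
    exact h
  have hEt : ∀ a b : ℝ, HasDerivAt (fun t' => Real.exp (3 / 2 * δ a t' / (1 + ζ * ν ^ 2)))
      (Real.exp (3 / 2 * δ a b / (1 + ζ * ν ^ 2)) * (3 / 2 * pdt δ a b / (1 + ζ * ν ^ 2))) b := by
    intro a b
    exact (((hδ.hasDerivT a b).const_mul (3 / 2 : ℝ)).div_const (1 + ζ * ν ^ 2)).exp
  have hG' : ∀ a b, G a b = γ a b * Real.exp (3 / 2 * δ a b / (1 + ζ * ν ^ 2)) := hG
  have hGX : ∀ a b, pdx G a b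
      = (3 / (4 * (1 + ζ * ν ^ 2)) * (γ a b * γ a b) + (mgen U ε ν) a b + (ε / 3 * (ζ + Real.sqrt ν))) * Real.exp (3 / 2 * δ a b / (1 + ζ * ν ^ 2)) := by
    intro a b
    rw [pdx_congr (f := G) (g := fun a b => γ a b * Real.exp (3 / 2 * δ a b / (1 + ζ * ν ^ 2))) hG',
        pdx_eq (f := fun a b => γ a b * Real.exp (3 / 2 * δ a b / (1 + ζ * ν ^ 2)))
          ((hγ.hasDerivX a b).mul (hEx a b)),
        hγX a b]
    field_simp
    ring
  have hGXX : ∀ a b, pdx (fun c d => pdx G c d) a b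
      = (pdx (mgen U ε ν) a b + 3 / (1 + ζ * ν ^ 2) * (γ a b * ((mgen U ε ν) a b + (ε / 3 * (ζ + Real.sqrt ν))))) * Real.exp (3 / 2 * δ a b / (1 + ζ * ν ^ 2)) := by
    intro a b
    rw [pdx_congr (f := fun c d => pdx G c d)
          (g := fun a b => (3 / (4 * (1 + ζ * ν ^ 2)) * (γ a b * γ a b) + (mgen U ε ν) a b + (ε / 3 * (ζ + Real.sqrt ν))) * Real.exp (3 / 2 * δ a b / (1 + ζ * ν ^ 2))) hGX,
        pdx_eq (f := fun a b => (3 / (4 * (1 + ζ * ν ^ 2)) * (γ a b * γ a b) + (mgen U ε ν) a b + (ε / 3 * (ζ + Real.sqrt ν))) * Real.exp (3 / 2 * δ a b / (1 + ζ * ν ^ 2)))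
          ((((((hγ.hasDerivX a b).mul (hγ.hasDerivX a b)).const_mul (3 / (4 * (1 + ζ * ν ^ 2)))).add
              (hm.hasDerivX a b)).add_const (ε / 3 * (ζ + Real.sqrt ν))).mul (hEx a b)),
        hγX a b]
    simp only [Pi.add_apply, Pi.mul_apply, Pi.sub_apply, Pi.neg_apply]
    field_simp
    ring
  have hGX3 : ∀ a b, pdx (fun a b => pdx (fun c d => pdx G c d) a b) a b
      = (pdx (pdx (mgen U ε ν)) a b + 9 / (2 * (1 + ζ * ν ^ 2)) * (γ a b * pdx (mgen U ε ν) a b)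
          + 3 / (1 + ζ * ν ^ 2) * (((mgen U ε ν) a b + (ε / 3 * (ζ + Real.sqrt ν))) * ((mgen U ε ν) a b + (ε / 3 * (ζ + Real.sqrt ν))))
          + 9 / (4 * (1 + ζ * ν ^ 2) ^ 2) * (γ a b * γ a b * ((mgen U ε ν) a b + (ε / 3 * (ζ + Real.sqrt ν))))) * Real.exp (3 / 2 * δ a b / (1 + ζ * ν ^ 2)) := by
    intro a b
    rw [pdx_congr (f := fun a b => pdx (fun c d => pdx G c d) a b)
          (g := fun a b => (pdx (mgen U ε ν) a b + 3 / (1 + ζ * ν ^ 2) * (γ a b * ((mgen U ε ν) a b + (ε / 3 * (ζ + Real.sqrt ν))))) * Real.exp (3 / 2 * δ a b / (1 + ζ * ν ^ 2))) hGXX,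
        pdx_eq (f := fun a b => (pdx (mgen U ε ν) a b + 3 / (1 + ζ * ν ^ 2) * (γ a b * ((mgen U ε ν) a b + (ε / 3 * (ζ + Real.sqrt ν))))) * Real.exp (3 / 2 * δ a b / (1 + ζ * ν ^ 2)))
          (((hmx.hasDerivX a b).add
              (((hγ.hasDerivX a b).mul ((hm.hasDerivX a b).add_const (ε / 3 * (ζ + Real.sqrt ν)))).const_mul
                (3 / (1 + ζ * ν ^ 2)))).mul (hEx a b)),
        hγX a b]
    simp only [Pi.add_apply, Pi.mul_apply, Pi.sub_apply, Pi.neg_apply]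
    field_simp
    ring
  have hγT' : ∀ a b, pdt γ a b
      = 2 / 3 * (ζ * ν ^ 2 + 1) * pdx (pdx U) a b
        - 2 / 3 * (ζ + Real.sqrt ν) * pdx γ a b - (pdx γ a b * U a b + γ a b * pdx U a b) := by
    intro a b
    rw [hγT a b,
        pdx_eq (f := fun a b => 2 / 3 * (ζ * ν ^ 2 + 1) * pdx U a b
            - 2 / 3 * (ζ + Real.sqrt ν) * γ a b - γ a b * U a b)
          ((((hUx.hasDerivX a b).const_mul (2 / 3 * (ζ * ν ^ 2 + 1))).sub
              ((hγ.hasDerivX a b).const_mul (2 / 3 * (ζ + Real.sqrt ν)))).sub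
            ((hγ.hasDerivX a b).mul (hU.hasDerivX a b)))]
  have hGT : ∀ a b, pdt G a b
      = (2 / 3 * (ζ * ν ^ 2 + 1) * pdx (fun c d => pdx U c d) a b
          - (2 / 3 * (ζ + Real.sqrt ν) + U a b)
              * (3 / (4 * (1 + ζ * ν ^ 2)) * (γ a b * γ a b) + (mgen U ε ν) a b + (ε / 3 * (ζ + Real.sqrt ν)))) * Real.exp (3 / 2 * δ a b / (1 + ζ * ν ^ 2)) := by
    intro a b
    rw [pdt_congr (f := G) (g := fun a b => γ a b * Real.exp (3 / 2 * δ a b / (1 + ζ * ν ^ 2))) hG',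
        pdt_eq (f := fun a b => γ a b * Real.exp (3 / 2 * δ a b / (1 + ζ * ν ^ 2)))
          ((hγ.hasDerivT a b).mul (hEt a b)),
        hγT' a b, hγX a b, hδT a b]
    field_simp
    ring
  have hmtx : ∀ a b, pdt (pdx (mgen U ε ν)) a b
      = -(pdx (pdx (mgen U ε ν)) a b) * U a b - 3 * (pdx (mgen U ε ν) a b * pdx U a b)
        - 2 * ((mgen U ε ν) a b * pdx (pdx U) a b)
        + 2 / 3 * (1 - ν ^ 2 * Real.sqrt ν) * pdx (pdx (pdx (pdx U))) a b := by
    intro a b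
    rw [clairaut hm a b,
        pdx_congr (f := pdt (mgen U ε ν))
          (g := fun a b => -pdx (mgen U ε ν) a b * U a b - 2 * (mgen U ε ν) a b * pdx U a b
              + 2 / 3 * (1 - ν ^ 2 * Real.sqrt ν)
                * pdx (fun a b => pdx (fun c d => pdx U c d) a b) a b) hUeq,
        pdx_eq (f := fun a b => -pdx (mgen U ε ν) a b * U a b - 2 * (mgen U ε ν) a b * pdx U a b
              + 2 / 3 * (1 - ν ^ 2 * Real.sqrt ν)
                * pdx (fun a b => pdx (fun c d => pdx U c d) a b) a b)
          ((((hmx.hasDerivX a b).neg.mul (hU.hasDerivX a b)).sub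
              (((hm.hasDerivX a b).const_mul 2).mul (hUx.hasDerivX a b))).add
            ((hUxxx.hasDerivX a b).const_mul (2 / 3 * (1 - ν ^ 2 * Real.sqrt ν))))]
    simp only [Pi.add_apply, Pi.mul_apply, Pi.sub_apply, Pi.neg_apply]
    ring
  have hGXXT : ∀ a b, pdt (fun a b => pdx (fun c d => pdx G c d) a b) a b
      = ((-(pdx (pdx (mgen U ε ν)) a b) * U a b - 3 * (pdx (mgen U ε ν) a b * pdx U a b)
            - 2 * ((mgen U ε ν) a b * pdx (pdx U) a b)
            + 2 / 3 * (1 - ν ^ 2 * Real.sqrt ν) * pdx (pdx (pdx (pdx U))) a b)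
          + 3 / (1 + ζ * ν ^ 2) * (((mgen U ε ν) a b + (ε / 3 * (ζ + Real.sqrt ν)))
              * (2 / 3 * (ζ * ν ^ 2 + 1) * pdx (pdx U) a b
                  - (2 / 3 * (ζ + Real.sqrt ν) + U a b)
                      * (-(3 / (4 * (1 + ζ * ν ^ 2))) * (γ a b * γ a b) + (mgen U ε ν) a b + (ε / 3 * (ζ + Real.sqrt ν)))
                  - γ a b * pdx U a b))
          + 3 / (1 + ζ * ν ^ 2) * (γ a b * (-(pdx (mgen U ε ν) a b) * U a b - 2 * ((mgen U ε ν) a b * pdx U a b)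
              + 2 / 3 * (1 - ν ^ 2 * Real.sqrt ν) * pdx (pdx (pdx U)) a b))
          + (pdx U a b - 3 / (2 * (1 + ζ * ν ^ 2)) * ((2 / 3 * (ζ + Real.sqrt ν) + U a b) * γ a b))
              * (pdx (mgen U ε ν) a b + 3 / (1 + ζ * ν ^ 2) * (γ a b * ((mgen U ε ν) a b + (ε / 3 * (ζ + Real.sqrt ν)))))) * Real.exp (3 / 2 * δ a b / (1 + ζ * ν ^ 2)) := by
    intro a b
    rw [pdt_congr (f := fun a b => pdx (fun c d => pdx G c d) a b)
          (g := fun a b => (pdx (mgen U ε ν) a b + 3 / (1 + ζ * ν ^ 2) * (γ a b * ((mgen U ε ν) a b + (ε / 3 * (ζ + Real.sqrt ν))))) * Real.exp (3 / 2 * δ a b / (1 + ζ * ν ^ 2))) hGXX,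
        pdt_eq (f := fun a b => (pdx (mgen U ε ν) a b + 3 / (1 + ζ * ν ^ 2) * (γ a b * ((mgen U ε ν) a b + (ε / 3 * (ζ + Real.sqrt ν))))) * Real.exp (3 / 2 * δ a b / (1 + ζ * ν ^ 2)))
          (((hmx.hasDerivT a b).add
              (((hγ.hasDerivT a b).mul ((hm.hasDerivT a b).add_const (ε / 3 * (ζ + Real.sqrt ν)))).const_mul
                (3 / (1 + ζ * ν ^ 2)))).mul (hEt a b)),
        hmtx a b, hγT' a b, hγX a b, hUeq a b, hδT a b]
    simp only [Pi.add_apply, Pi.mul_apply, Pi.sub_apply, Pi.neg_apply]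
    field_simp
    have hζ' : 1 + ν ^ 2 * ζ ≠ 0 := by rw [mul_comm]; exact hζ
    field_simp
    ring
  have hmx_val : ∀ a b, pdx (mgen U ε ν) a b
      = ν ^ 2 * pdx (pdx (pdx U)) a b - ε * pdx U a b := by
    intro a b
    exact pdx_eq (f := (mgen U ε ν))
      (((hUxx.hasDerivX a b).const_mul (ν ^ 2)).sub ((hU.hasDerivX a b).const_mul ε))
  have hmxx_val : ∀ a b, pdx (pdx (mgen U ε ν)) a b
      = ν ^ 2 * pdx (pdx (pdx (pdx U))) a b - ε * pdx (pdx U) a b := by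
    intro a b
    rw [pdx_congr (f := pdx (mgen U ε ν))
          (g := fun a b => ν ^ 2 * pdx (pdx (pdx U)) a b - ε * pdx U a b) hmx_val,
        pdx_eq (f := fun a b => ν ^ 2 * pdx (pdx (pdx U)) a b - ε * pdx U a b)
          (((hUxxx.hasDerivX a b).const_mul (ν ^ 2)).sub ((hUx.hasDerivX a b).const_mul ε))]
  have hm_val : ∀ a b, (mgen U ε ν) a b = ν ^ 2 * pdx (pdx U) a b - ε * U a b := fun a b => rfl
  intro x t
  rw [hGXXT x t, hGX3 x t, hGXX x t, hGX x t, hGT x t, hG x t]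
  simp only [hm_val, hmx_val, hmxx_val]
  rcases hε with rfl | rfl <;> field_simp <;> ring
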